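/- There is a bijection from {σ ∈ F_g : σ⁻¹(k) ≤ k} to F_{g-1} given by deleting the entry equal to k from the increasing list [σ(1),...,σ(g)] and relabeling each remaining entry m by m-1 if k < m < 2g+1-k and by m-2 if m > 2g+1-k. -/

import Mathlib

/-- The condition defining `W_g` inside `S_{2g}` (0-indexed). -/
def Wcond (g : ℕ) (σ : Equiv.Perm (Fin (2 * g))) : Prop :=
  ∀ i : Fin (2 * g), i.val < g → (σ i).val + (σ i.rev).val = 2 * g - 1

/-- Final (Kostant) elements of `W_g`. -/
def IsFinal (g : ℕ) (σ : Equiv.Perm (Fin (2 * g))) : Prop :=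
  Wcond g σ ∧ ∀ i j : Fin (2 * g), i < j → j.val < g → σ i < σ j

/-- The image set `{σ(1),…,σ(g)}` as a set of 1-indexed natural values. -/
def imgNat (g : ℕ) (σ : Equiv.Perm (Fin (2 * g))) : Finset ℕ :=
  (Finset.univ.filter (fun v : Fin (2 * g) => (σ.symm v).val < g)).image (fun v => v.val + 1)

/-- The relabelling: `m ↦ m` if `m < k`, `m ↦ m-1` if `k < m < 2g+1-k`,
`m ↦ m-2` if `m > 2g+1-k` (1-indexed values). -/
def relabel (g k : ℕ) : ℕ → ℕ := fun m =>
  if m < k then m else if m < 2 * g + 1 - k then m - 1 else m - 2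

/-!
A final element `σ` is determined by the set `S = {σ(1), …, σ(g)}`. The symmetry of `W_g` makes
`S` contain exactly one element of each pair `{v, 2g+1-v}`, finality makes `σ(1) < ⋯ < σ(g)` list
`S` in increasing order, and the symmetry fixes the remaining values; conversely every such set
arises. Since `σ(i) ≥ i` for `i ≤ g`, the condition `σ⁻¹(k) ≤ k` just says `k ∈ S`. Deleting the
pair `{k, 2g+1-k}` from `{1, …, 2g}` and closing the gaps is the relabelling; it is increasing and
compatible with `v ↦ 2g+1-v`, so it carries the sets `S ∋ k` bijectively onto the sets of the
same kind for `g - 1`.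
-/

open Finset Equiv

section RevTransversal

variable {n : ℕ}

def IsRevTransversal (S : Finset (Fin n)) : Prop :=
  ∀ v : Fin n, v ∈ S ↔ v.rev ∉ S

variable {S : Finset (Fin n)}

theorem IsRevTransversal.rev_mem_iff (hS : IsRevTransversal S) (v : Fin n) :
    v.rev ∈ S ↔ v ∉ S := by
  rw [hS v.rev, Fin.rev_rev]

theorem IsRevTransversal.two_mul_card (hS : IsRevTransversal S) : 2 * S.card = n := by
  have hrev : S.map Fin.revPerm.toEmbedding = Sᶜ := by
    ext v
    rw [mem_map_equiv, mem_compl, Fin.revPerm_symm, Fin.revPerm_apply, hS.rev_mem_iff]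
  have hcard := card_add_card_compl S
  rw [← hrev, card_map, Fintype.card_fin] at hcard
  omega

theorem IsRevTransversal.preimage {m : ℕ} (hS : IsRevTransversal S) {e : Fin m → Fin n}
    (he : Function.Injective e) (he_rev : ∀ w, e w.rev = (e w).rev) :
    IsRevTransversal (S.preimage e he.injOn) := by
  intro w
  simp only [mem_preimage, he_rev]
  exact hS (e w)

end RevTransversal

section PosImage

variable {g : ℕ} {σ : Perm (Fin (2 * g))}

theorem wcond_iff_apply_rev : Wcond g σ ↔ ∀ i, σ i.rev = (σ i).rev := by
  constructor
  · intro hw i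
    have hσi := (σ i).isLt
    have hσri := (σ i.rev).isLt
    rcases lt_or_ge i.val g with hi | hi
    · have := hw i hi
      ext
      rw [Fin.val_rev]
      omega
    · have := hw i.rev (by rw [Fin.val_rev]; omega)
      rw [Fin.rev_rev] at this
      ext
      rw [Fin.val_rev]
      omega
  · intro h i _
    have := (σ i).isLt
    rw [h, Fin.val_rev]
    omega

theorem Wcond.symm_apply_rev (hσ : Wcond g σ) (v : Fin (2 * g)) :
    σ.symm v.rev = (σ.symm v).rev := by
  rw [symm_apply_eq, wcond_iff_apply_rev.1 hσ, apply_symm_apply]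

def posImage (g : ℕ) (σ : Perm (Fin (2 * g))) : Finset (Fin (2 * g)) :=
  univ.filter fun v => (σ.symm v).val < g

theorem imgNat_eq_image_posImage (g : ℕ) (σ : Perm (Fin (2 * g))) :
    imgNat g σ = (posImage g σ).image fun v => v.val + 1 :=
  rfl

theorem mem_posImage {v : Fin (2 * g)} : v ∈ posImage g σ ↔ (σ.symm v).val < g := by
  simp [posImage]

theorem Wcond.isRevTransversal_posImage (hσ : Wcond g σ) : IsRevTransversal (posImage g σ) := by
  intro v
  have := (σ.symm v).isLt
  rw [mem_posImage, mem_posImage, hσ.symm_apply_rev, Fin.val_rev]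
  omega

theorem Wcond.card_posImage (hσ : Wcond g σ) : (posImage g σ).card = g := by
  have := hσ.isRevTransversal_posImage.two_mul_card
  omega

theorem IsFinal.le_apply (hσ : IsFinal g σ) {i : Fin (2 * g)} (hi : i.val < g) : i ≤ σ i := by
  obtain ⟨i, hi'⟩ := i
  induction i with
  | zero => exact Fin.le_def.2 (Nat.zero_le _)
  | succ m ih =>
    change m + 1 < g at hi
    have hstep := hσ.2 ⟨m, by omega⟩ ⟨m + 1, hi'⟩ (Fin.mk_lt_mk.2 (Nat.lt_succ_self m)) hi
    have hm := ih (by omega) (show m < g by omega)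
    change m ≤ (σ _).val at hm
    change (σ _).val < (σ _).val at hstep
    change m + 1 ≤ (σ _).val
    omega

theorem IsFinal.symm_apply_le_iff (hσ : IsFinal g σ) {a : Fin (2 * g)} (ha : a.val < g) :
    σ.symm a ≤ a ↔ a ∈ posImage g σ := by
  rw [mem_posImage]
  refine ⟨fun h => lt_of_le_of_lt h ha, fun h => ?_⟩
  simpa using hσ.le_apply h

theorem IsFinal.apply_eq_orderEmbOfFin (hσ : IsFinal g σ) {S : Finset (Fin (2 * g))}
    (hS : posImage g σ = S) (hc : S.card = g) {i : Fin (2 * g)} (hi : i.val < g) :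
    σ i = S.orderEmbOfFin hc ⟨i, hi⟩ := by
  have hunique := orderEmbOfFin_unique hc (f := fun j : Fin g => σ ⟨j, by omega⟩)
    (fun j => by rw [← hS, mem_posImage, symm_apply_apply]; exact j.isLt)
    (fun j j' hjj' => hσ.2 _ _ hjj' j'.isLt)
  exact congrFun hunique ⟨i, hi⟩

theorem IsFinal.ext {τ : Perm (Fin (2 * g))} (hσ : IsFinal g σ) (hτ : IsFinal g τ)
    (h : posImage g σ = posImage g τ) : σ = τ := by
  have hlow : ∀ i : Fin (2 * g), i.val < g → σ i = τ i := fun i hi =>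
    (hσ.apply_eq_orderEmbOfFin h hτ.1.card_posImage hi).trans
      (hτ.apply_eq_orderEmbOfFin rfl hτ.1.card_posImage hi).symm
  ext1 i
  rcases lt_or_ge i.val g with hi | hi
  · exact hlow i hi
  · rw [← Fin.rev_rev i, wcond_iff_apply_rev.1 hσ.1, wcond_iff_apply_rev.1 hτ.1, hlow]
    rw [Fin.val_rev]
    omega

end PosImage

section Construction

variable {g : ℕ} {S : Finset (Fin (2 * g))}

def transversalFun (S : Finset (Fin (2 * g))) (hc : S.card = g) (i : Fin (2 * g)) :
    Fin (2 * g) :=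
  if hi : i.val < g then S.orderEmbOfFin hc ⟨i, hi⟩
  else (S.orderEmbOfFin hc ⟨i.rev, by rw [Fin.val_rev]; omega⟩).rev

variable (hc : S.card = g)

theorem transversalFun_rev (i : Fin (2 * g)) :
    transversalFun S hc i.rev = (transversalFun S hc i).rev := by
  have := i.isLt
  by_cases hi : i.val < g
  · rw [transversalFun, dif_neg (by rw [Fin.val_rev]; omega), transversalFun, dif_pos hi]
    simp only [Fin.rev_rev]
  · rw [transversalFun, dif_pos (by rw [Fin.val_rev]; omega), transversalFun, dif_neg hi,
      Fin.rev_rev]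

theorem transversalFun_mem_iff (hS : IsRevTransversal S) (i : Fin (2 * g)) :
    transversalFun S hc i ∈ S ↔ i.val < g := by
  by_cases hi : i.val < g
  · rw [transversalFun, dif_pos hi]
    exact iff_of_true (orderEmbOfFin_mem S hc _) hi
  · rw [transversalFun, dif_neg hi, hS.rev_mem_iff]
    exact iff_of_false (not_not.2 (orderEmbOfFin_mem S hc _)) hi

theorem transversalFun_injective (hS : IsRevTransversal S) :
    Function.Injective (transversalFun S hc) := by
  have hlow : ∀ i j : Fin (2 * g), i.val < g → j.val < g →
      transversalFun S hc i = transversalFun S hc j → i = j := by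
    intro i j hi hj hij
    rw [transversalFun, dif_pos hi, transversalFun, dif_pos hj] at hij
    exact Fin.ext (Fin.mk.inj_iff.1 ((S.orderEmbOfFin hc).injective hij))
  intro i j hij
  have hij' : i.val < g ↔ j.val < g := by
    rw [← transversalFun_mem_iff hc hS, ← transversalFun_mem_iff hc hS, hij]
  by_cases hi : i.val < g
  · exact hlow i j hi (hij'.1 hi) hij
  · have hj : ¬ j.val < g := fun hj => hi (hij'.2 hj)
    refine Fin.rev_injective (hlow _ _ ?_ ?_ ?_)
    · rw [Fin.val_rev]; omega
    · rw [Fin.val_rev]; omega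
    · rw [transversalFun_rev, transversalFun_rev, hij]

theorem IsRevTransversal.exists_isFinal_posImage_eq (hS : IsRevTransversal S) :
    ∃ σ : Perm (Fin (2 * g)), IsFinal g σ ∧ posImage g σ = S := by
  have hc : S.card = g := by
    have := hS.two_mul_card
    omega
  let σ := Equiv.ofBijective _
    (Finite.injective_iff_bijective.1 (transversalFun_injective hc hS))
  refine ⟨σ, ⟨wcond_iff_apply_rev.2 (transversalFun_rev hc), fun i j hij hj => ?_⟩, ?_⟩
  · have hi : i.val < g := lt_trans hij hj
    change transversalFun S hc i < transversalFun S hc j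
    rw [transversalFun, dif_pos hi, transversalFun, dif_pos hj]
    exact (S.orderEmbOfFin hc).strictMono hij
  · ext v
    rw [mem_posImage, ← transversalFun_mem_iff hc hS]
    exact iff_of_eq (congrArg (· ∈ S) (apply_symm_apply σ v))

end Construction

section SkipPair

variable {g : ℕ} (a : Fin (2 * g))

/-- The increasing injection `Fin (2 * (g - 1)) → Fin (2 * g)` whose range misses `a` and
`a.rev`. -/
def skipPair (w : Fin (2 * (g - 1))) : Fin (2 * g) :=
  ⟨if w.val < a.val then w.val else if w.val + a.val + 2 < 2 * g then w.val + 1 else w.val + 2,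
    by have := w.isLt; split_ifs <;> omega⟩

theorem skipPair_injective : Function.Injective (skipPair a) := by
  intro w w' h
  have := w.isLt
  have := w'.isLt
  simp only [skipPair, Fin.mk.injEq] at h
  ext
  split_ifs at h <;> omega

theorem skipPair_ne (w : Fin (2 * (g - 1))) : skipPair a w ≠ a := by
  simp only [skipPair, ne_eq, Fin.ext_iff]
  split_ifs <;> omega

theorem relabel_skipPair (w : Fin (2 * (g - 1))) :
    relabel g (a.val + 1) ((skipPair a w).val + 1) = w.val + 1 := by
  have := w.isLt
  simp only [skipPair, relabel]
  split_ifs <;> omega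

variable {a} (ha : a.val < g)
include ha

theorem skipPair_ne_rev (w : Fin (2 * (g - 1))) : skipPair a w ≠ a.rev := by
  have := w.isLt
  simp only [skipPair, ne_eq, Fin.ext_iff, Fin.val_rev]
  split_ifs <;> omega

theorem skipPair_rev (w : Fin (2 * (g - 1))) : skipPair a w.rev = (skipPair a w).rev := by
  have := w.isLt
  simp only [skipPair, Fin.ext_iff, Fin.val_rev]
  split_ifs <;> omega

theorem eq_or_eq_rev_or_exists_skipPair_eq (v : Fin (2 * g)) :
    v = a ∨ v = a.rev ∨ ∃ w, skipPair a w = v := by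
  by_cases h1 : v = a
  · exact Or.inl h1
  by_cases h2 : v = a.rev
  · exact Or.inr (Or.inl h2)
  have := v.isLt
  rw [Fin.ext_iff] at h1
  rw [Fin.ext_iff, Fin.val_rev] at h2
  refine Or.inr (Or.inr ⟨⟨if v.val < a.val then v.val else if v.val + a.val < 2 * g then v.val - 1
    else v.val - 2, by split_ifs <;> omega⟩, ?_⟩)
  simp only [skipPair, Fin.ext_iff]
  split_ifs <;> omega

end SkipPair

section DeletePair

variable {g : ℕ} (a : Fin (2 * g))

noncomputable def deletePair (S : Finset (Fin (2 * g))) : Finset (Fin (2 * (g - 1))) :=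
  S.preimage (skipPair a) (skipPair_injective a).injOn

def insertPair (T : Finset (Fin (2 * (g - 1)))) : Finset (Fin (2 * g)) :=
  insert a (T.image (skipPair a))

variable {a} {S : Finset (Fin (2 * g))} {T : Finset (Fin (2 * (g - 1)))}

theorem mem_deletePair {w : Fin (2 * (g - 1))} : w ∈ deletePair a S ↔ skipPair a w ∈ S :=
  mem_preimage

theorem mem_insertPair_self : a ∈ insertPair a T :=
  mem_insert_self a _

theorem skipPair_mem_insertPair {w : Fin (2 * (g - 1))} :
    skipPair a w ∈ insertPair a T ↔ w ∈ T := by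
  simp [insertPair, skipPair_ne, (skipPair_injective a).eq_iff]

theorem deletePair_insertPair : deletePair a (insertPair a T) = T := by
  ext w
  rw [mem_deletePair, skipPair_mem_insertPair]

variable (ha : a.val < g)
include ha

theorem rev_not_mem_insertPair : a.rev ∉ insertPair a T := by
  have ha_rev : a.rev ≠ a := by
    rw [ne_eq, Fin.ext_iff, Fin.val_rev]
    omega
  simp [insertPair, ha_rev, skipPair_ne_rev ha]

theorem IsRevTransversal.deletePair (hS : IsRevTransversal S) :
    IsRevTransversal (deletePair a S) :=
  hS.preimage (skipPair_injective a) (skipPair_rev ha)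

theorem IsRevTransversal.insertPair (hT : IsRevTransversal T) :
    IsRevTransversal (insertPair a T) := by
  intro v
  rcases eq_or_eq_rev_or_exists_skipPair_eq ha v with rfl | rfl | ⟨w, rfl⟩
  · exact iff_of_true mem_insertPair_self (rev_not_mem_insertPair ha)
  · rw [Fin.rev_rev]
    exact iff_of_false (rev_not_mem_insertPair ha) (not_not.2 mem_insertPair_self)
  · rw [← skipPair_rev ha, skipPair_mem_insertPair, skipPair_mem_insertPair]
    exact hT w

theorem insertPair_deletePair (hS : IsRevTransversal S) (haS : a ∈ S) :
    insertPair a (deletePair a S) = S := by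
  ext v
  rcases eq_or_eq_rev_or_exists_skipPair_eq ha v with rfl | rfl | ⟨w, rfl⟩
  · exact iff_of_true mem_insertPair_self haS
  · exact iff_of_false (rev_not_mem_insertPair ha) ((hS.rev_mem_iff a).not.2 (not_not.2 haS))
  · rw [skipPair_mem_insertPair, mem_deletePair]

theorem image_erase_image_relabel (hS : IsRevTransversal S) (haS : a ∈ S) {k : ℕ}
    (hk : k = a.val + 1) :
    ((S.image fun v => v.val + 1).erase k).image (relabel g k) =
      (deletePair a S).image fun w => w.val + 1 := by
  subst hk
  have hsucc : Function.Injective fun v : Fin (2 * g) => v.val + 1 :=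
    (add_left_injective 1).comp Fin.val_injective
  have herase : S.erase a = (deletePair a S).image (skipPair a) := by
    conv_lhs => rw [← insertPair_deletePair ha hS haS]
    exact erase_insert fun h => by
      obtain ⟨w, -, hw⟩ := mem_image.1 h
      exact skipPair_ne a w hw
  rw [← image_erase hsucc, herase, image_image, image_image]
  exact image_congr fun w _ => relabel_skipPair a w

end DeletePair

/-- deleting the entry `k` from the increasing list
`[σ(1),…,σ(g)]` and relabelling gives a bijection
`{σ ∈ F_g : σ⁻¹(k) ≤ k} → F_{g-1}`. -/
theorem final_delete_relabel_bijection (g k : ℕ) (hk1 : 1 ≤ k) (hkg : k ≤ g) :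
    ∃ f : {σ : Equiv.Perm (Fin (2 * g)) //
            IsFinal g σ ∧ (σ.symm ⟨k - 1, by omega⟩).val < k} →
          {τ : Equiv.Perm (Fin (2 * (g - 1))) // IsFinal (g - 1) τ},
      Function.Bijective f ∧
      ∀ σ, imgNat (g - 1) (f σ).1 = ((imgNat g σ.1).erase k).image (relabel g k) := by
  set a : Fin (2 * g) := ⟨k - 1, by omega⟩
  have ha : a.val < g := show k - 1 < g by omega
  have hk : k = a.val + 1 := show k = k - 1 + 1 by omega
  have haS (σ : {σ : Perm (Fin (2 * g)) // IsFinal g σ ∧ (σ.symm a).val < k}) :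
      a ∈ posImage g σ.1 :=
    (σ.2.1.symm_apply_le_iff ha).1 (Fin.le_def.2 (by have := σ.2.2; omega))
  choose f hf hfS using fun σ : {σ : Perm (Fin (2 * g)) // IsFinal g σ ∧ (σ.symm a).val < k} =>
    (σ.2.1.1.isRevTransversal_posImage.deletePair ha).exists_isFinal_posImage_eq
  refine ⟨fun σ => ⟨f σ, hf σ⟩, ⟨fun σ σ' h => ?_, fun τ => ?_⟩, fun σ => ?_⟩
  · have hdel : deletePair a (posImage g σ.1) = deletePair a (posImage g σ'.1) := by
      rw [← hfS, ← hfS]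
      exact congrArg (posImage (g - 1) ∘ Subtype.val) h
    refine Subtype.ext (σ.2.1.ext σ'.2.1 ?_)
    rw [← insertPair_deletePair ha σ.2.1.1.isRevTransversal_posImage (haS σ), hdel,
      insertPair_deletePair ha σ'.2.1.1.isRevTransversal_posImage (haS σ')]
  · obtain ⟨σ, hσ, hσS⟩ :=
      (τ.2.1.isRevTransversal_posImage.insertPair ha).exists_isFinal_posImage_eq
    have hcond : (σ.symm a).val < k := by
      have := (hσ.symm_apply_le_iff ha).2 (hσS ▸ mem_insertPair_self)
      rw [Fin.le_def] at this
      omega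
    refine ⟨⟨σ, hσ, hcond⟩, Subtype.ext ((hf _).ext τ.2 ?_)⟩
    rw [hfS, hσS, deletePair_insertPair]
  · rw [imgNat_eq_image_posImage, hfS, imgNat_eq_image_posImage,
      image_erase_image_relabel ha σ.2.1.1.isRevTransversal_posImage (haS σ) hk]
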